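/- arXiv:2605.00247 — 2 statements merged into one kernel-verified Lean document; each statement's English description precedes it below -/
import Mathlib

section
/- Associativity of CGL merging: define the merge of summaries (n_A, μ_A, M_A) and (n_B, μ_B, M_B) with n_A, n_B > 0 as (n_A+n_B, (n_A μ_A + n_B μ_B)/(n_A+n_B), M_A + M_B + (n_A n_B/(n_A+n_B)) (μ_B − μ_A)(μ_B − μ_A)^T). Then this merge operation is commutative and associative on the set of triples (n, μ, M) with n > 0 a real number, μ ∈ R^p, M a p×p real matrix. -/
open Matrix

/-- A CGL summary: count, mean, centered scatter matrix. -/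
noncomputable def CGLMerge (p : ℕ) (a b : ℝ × (Fin p → ℝ) × Matrix (Fin p) (Fin p) ℝ) :
    ℝ × (Fin p → ℝ) × Matrix (Fin p) (Fin p) ℝ :=
  ⟨a.1 + b.1,
   (a.1 + b.1)⁻¹ • (a.1 • a.2.1 + b.1 • b.2.1),
   a.2.2 + b.2.2 +
     (a.1 * b.1 / (a.1 + b.1)) •
       Matrix.vecMulVec (b.2.1 - a.2.1) (b.2.1 - a.2.1)⟩

/-- The CGL merge is commutative and associative on summaries with positive counts. -/
theorem cgl_merge_comm_assoc (p : ℕ)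
    (a b c : ℝ × (Fin p → ℝ) × Matrix (Fin p) (Fin p) ℝ)
    (ha : 0 < a.1) (hb : 0 < b.1) (hc : 0 < c.1) :
    CGLMerge p a b = CGLMerge p b a ∧
      CGLMerge p (CGLMerge p a b) c = CGLMerge p a (CGLMerge p b c) := by
  obtain ⟨na, μa, Ma⟩ := a
  obtain ⟨nb, μb, Mb⟩ := b
  obtain ⟨nc, μc, Mc⟩ := c
  simp only at ha hb hc
  have hab : na + nb ≠ 0 := by positivity
  have hbc : nb + nc ≠ 0 := by positivity
  have habc : na + nb + nc ≠ 0 := by positivity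
  constructor
  · simp only [CGLMerge, Prod.mk.injEq]
    refine ⟨by ring, ?_, ?_⟩
    · funext i
      simp only [Pi.smul_apply, Pi.add_apply, smul_eq_mul]
      field_simp
      ring
    · ext i j
      simp only [Matrix.add_apply, Matrix.smul_apply, Matrix.vecMulVec_apply,
        Pi.sub_apply, smul_eq_mul]
      field_simp
      ring
  · simp only [CGLMerge, Prod.mk.injEq]
    refine ⟨by ring, ?_, ?_⟩
    · funext i
      simp only [Pi.smul_apply, Pi.add_apply, smul_eq_mul]
      field_simp
      ring
    · ext i j
      simp only [Matrix.add_apply, Matrix.smul_apply, Matrix.vecMulVec_apply,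
        Pi.sub_apply, Pi.smul_apply, Pi.add_apply, smul_eq_mul]
      field_simp
      ring
end

section
/- Exchangeability coverage bound for split conformal prediction: if Z_1,...,Z_m,Z_{m+1} are exchangeable real-valued random variables (e.g., i.i.d.) and q̂ is the ⌈(m+1)(1−α)⌉-th order statistic of Z_1,...,Z_m for α ∈ (0,1) with ⌈(m+1)(1−α)⌉ ≤ m, then P(Z_{m+1} ≤ q̂) ≥ 1 − α. -/
open MeasureTheory Finset
open scoped ENNReal

/-- The `k`-th smallest value (k ≥ 1) of a finite family of reals, defined as the
least threshold `q` with at least `k` of the values `≤ q`. -/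
noncomputable def orderStat {n : ℕ} (k : ℕ) (z : Fin n → ℝ) : ℝ :=
  sInf {q : ℝ | k ≤ (Finset.univ.filter fun i => z i ≤ q).card}

/-!
Let `Z₀, …, Z_m` be exchangeable and `k = ⌈(m+1)(1-α)⌉`. Call `j` *small* if fewer than `k`
of the `Z i` lie strictly below `Z j`. For every outcome at least `k` indices are small (the
`k` lowest positions of a sorting permutation), and by exchangeability each index is small
with the same probability `p`, so `k ≤ (m+1) p`. Finally, if the last index is small then
`Z_m` is at most the `k`-th order statistic of `Z₀, …, Z_{m-1}`, whence the coverage is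
at least `p ≥ k/(m+1) ≥ 1 - α`.
-/

section StrictRank

variable {ι α : Type*} [Fintype ι] [LinearOrder α]

def strictRank (x : ι → α) (j : ι) : ℕ := #{i | x i < x j}

lemma strictRank_comp_perm (x : ι → α) (σ : Equiv.Perm ι) (j : ι) :
    strictRank (x ∘ σ) j = strictRank x (σ j) := by
  simp only [strictRank, card_filter, Function.comp_apply]
  exact Equiv.sum_comp σ fun i => if x i < x (σ j) then 1 else 0

lemma strictRank_le_of_monotone {n : ℕ} {y : Fin n → α} (hy : Monotone y) (t : Fin n) :
    strictRank y t ≤ t :=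
  calc #{i | y i < y t} ≤ #(Iio t) :=
        card_le_card fun _ hi => mem_Iio.2 (hy.reflect_lt (mem_filter.1 hi).2)
    _ = t := Fin.card_Iio t

lemma le_card_filter_strictRank_lt {n k : ℕ} (hk : k ≤ n) (x : Fin n → α) :
    k ≤ #{j | strictRank x j < k} := by
  set σ := Tuple.sort x
  have hσ (t : Fin n) : strictRank x (σ t) ≤ t := by
    rw [← strictRank_comp_perm]
    exact strictRank_le_of_monotone (Tuple.monotone_sort x) t
  calc k = #(univ : Finset (Fin k)) := by simp
    _ ≤ _ := card_le_card_of_injOn (fun t => σ (Fin.castLE hk t))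
        (fun t _ => mem_filter.2 ⟨mem_univ _, (hσ _).trans_lt t.isLt⟩)
        (σ.injective.comp (Fin.castLE_injective hk)).injOn

end StrictRank

lemma le_orderStat_of_card_lt {n k : ℕ} (hkn : k ≤ n) (z : Fin n → ℝ) {t : ℝ}
    (h : #{i | z i < t} < k) : t ≤ orderStat k z := by
  have hne : (univ : Finset (Fin n)).Nonempty := univ_nonempty_iff.2 ⟨⟨0, by omega⟩⟩
  refine le_csInf ⟨univ.sup' hne z, ?_⟩ fun q hq => ?_
  · change k ≤ #{i | z i ≤ univ.sup' hne z}
    rwa [filter_true_of_mem fun i _ => le_sup' z (mem_univ i), card_univ, Fintype.card_fin]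
  · by_contra! hqt
    have hsub : (univ.filter fun i => z i ≤ q) ⊆ univ.filter fun i => z i < t :=
      monotone_filter_right _ fun _ _ hi => hi.trans_lt hqt
    exact (hq.trans (card_le_card hsub)).not_gt h

lemma le_orderStat_of_strictRank_last_lt {m k : ℕ} (hkm : k ≤ m) (y : Fin (m + 1) → ℝ)
    (h : strictRank y (Fin.last m) < k) :
    y (Fin.last m) ≤ orderStat k fun i : Fin m => y i.castSucc := by
  refine le_orderStat_of_card_lt hkm _ (lt_of_le_of_lt ?_ h)
  exact card_le_card_of_injOn Fin.castSucc (fun i hi => by simpa using hi)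
    (Fin.castSucc_injective m).injOn

open Classical in
lemma natCast_mul_measure_univ_le_sum {Ω ι : Type*} [MeasurableSpace Ω] [Fintype ι]
    (μ : Measure Ω) {B : ι → Set Ω} (hB : ∀ j, MeasurableSet (B j)) {k : ℕ}
    (hk : ∀ ω, k ≤ #{j | ω ∈ B j}) : k * μ Set.univ ≤ ∑ j, μ (B j) := by
  have hind (ω : Ω) : (k : ℝ≥0∞) ≤ ∑ j, (B j).indicator 1 ω := by
    simpa [Set.indicator_apply, ← card_filter] using hk ω
  calc k * μ Set.univ = ∫⁻ _, (k : ℝ≥0∞) ∂μ := (lintegral_const _).symm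
    _ ≤ ∫⁻ ω, ∑ j, (B j).indicator 1 ω ∂μ := lintegral_mono hind
    _ = ∑ j, μ (B j) := by
      rw [lintegral_finsetSum _ fun j _ => measurable_one.indicator (hB j)]
      exact sum_congr rfl fun j _ => lintegral_indicator_one (hB j)

lemma measure_preimage_comp_perm {Ω ι β : Type*} [MeasurableSpace Ω] [MeasurableSpace β]
    (μ : Measure Ω) {X : Ω → ι → β} (hX : Measurable X) {σ : Equiv.Perm ι}
    (hσ : μ.map (fun ω i => X ω (σ i)) = μ.map X) {S : Set (ι → β)} (hS : MeasurableSet S) :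
    μ (X ⁻¹' ((· ∘ σ) ⁻¹' S)) = μ (X ⁻¹' S) := by
  have hXσ : Measurable fun ω i => X ω (σ i) :=
    measurable_pi_lambda _ fun i => (measurable_pi_apply (σ i)).comp hX
  rw [← Measure.map_apply hX hS, ← hσ, Measure.map_apply hXσ hS]
  rfl

section RankEvents

variable {α : Type*} [LinearOrder α] [TopologicalSpace α] [OrderClosedTopology α]
  [SecondCountableTopology α] [MeasurableSpace α] [OpensMeasurableSpace α]

lemma measurableSet_strictRank_lt {ι : Type*} [Fintype ι] (j : ι) (k : ℕ) :
    MeasurableSet {x : ι → α | strictRank x j < k} := by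
  simp only [strictRank, card_filter]
  refine measurableSet_lt (Finset.measurable_sum _ fun i _ => ?_) measurable_const
  exact Measurable.ite (measurableSet_lt (measurable_pi_apply i) (measurable_pi_apply j))
    measurable_const measurable_const

lemma measure_strictRank_lt_eq {Ω ι : Type*} [MeasurableSpace Ω] [Fintype ι] [DecidableEq ι]
    (μ : Measure Ω) {X : Ω → ι → α} (hX : Measurable X)
    (hexch : ∀ σ : Equiv.Perm ι, μ.map (fun ω i => X ω (σ i)) = μ.map X) (k : ℕ) (j j' : ι) :
    μ (X ⁻¹' {x | strictRank x j < k}) = μ (X ⁻¹' {x | strictRank x j' < k}) := by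
  have hswap : {x : ι → α | strictRank x j < k} =
      (· ∘ Equiv.swap j j') ⁻¹' {x | strictRank x j' < k} := by
    ext x
    simp [strictRank_comp_perm]
  rw [hswap, measure_preimage_comp_perm μ hX (hexch _) (measurableSet_strictRank_lt j' k)]

end RankEvents

lemma ENNReal.ofReal_le_of_natCast_le_mul {n k : ℕ} {a : ℝ} {p : ℝ≥0∞} (hn : n ≠ 0)
    (ha : n * a ≤ k) (hp : (k : ℝ≥0∞) ≤ n * p) : ENNReal.ofReal a ≤ p := by
  rw [← ENNReal.mul_le_mul_iff_right (Nat.cast_ne_zero.2 hn) (ENNReal.natCast_ne_top n)]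
  calc n * ENNReal.ofReal a = ENNReal.ofReal (n * a) := by
        rw [ENNReal.ofReal_mul (Nat.cast_nonneg n), ENNReal.ofReal_natCast]
    _ ≤ ENNReal.ofReal k := ENNReal.ofReal_le_ofReal ha
    _ = k := ENNReal.ofReal_natCast k
    _ ≤ n * p := hp

theorem conformal_coverage_general {Ω : Type*} [MeasurableSpace Ω]
    (ℙ : Measure Ω) [IsProbabilityMeasure ℙ]
    (m : ℕ) (Z : Fin (m + 1) → Ω → ℝ) (hZ : ∀ i, Measurable (Z i))
    (hexch : ∀ σ : Equiv.Perm (Fin (m + 1)),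
      Measure.map (fun ω i => Z (σ i) ω) ℙ = Measure.map (fun ω i => Z i ω) ℙ)
    (α : ℝ)
    (hk : ⌈((m : ℝ) + 1) * (1 - α)⌉₊ ≤ m) :
    ENNReal.ofReal (1 - α) ≤
      ℙ {ω | Z (Fin.last m) ω ≤
        orderStat (⌈((m : ℝ) + 1) * (1 - α)⌉₊)
          (fun i : Fin m => Z i.castSucc ω)} := by
  set k := ⌈((m : ℝ) + 1) * (1 - α)⌉₊
  set X : Ω → Fin (m + 1) → ℝ := fun ω i => Z i ω
  have hX : Measurable X := measurable_pi_lambda _ hZ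
  have hcount : (k : ℝ≥0∞) ≤ (m + 1 : ℕ) * ℙ (X ⁻¹' {x | strictRank x (Fin.last m) < k}) := by
    have h := natCast_mul_measure_univ_le_sum ℙ (fun j => hX (measurableSet_strictRank_lt j k))
      fun ω => by convert le_card_filter_strictRank_lt (Nat.le_succ_of_le hk) (X ω); rfl
    rwa [measure_univ, mul_one, sum_congr rfl fun j _ => measure_strictRank_lt_eq ℙ hX hexch k j _,
      sum_const, card_univ, Fintype.card_fin, nsmul_eq_mul] at h
  refine le_trans ?_ (measure_mono fun ω hω => le_orderStat_of_strictRank_last_lt hk (X ω) hω)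
  exact ENNReal.ofReal_le_of_natCast_le_mul m.succ_ne_zero
    (by push_cast; exact Nat.le_ceil _) hcount

/-- Split-conformal coverage bound from exchangeability: if `Z 0, …, Z m` are
exchangeable and `q̂` is the `⌈(m+1)(1−α)⌉`-th order statistic of the first `m`
variables, then `P(Z m ≤ q̂) ≥ 1 − α`. -/
theorem conformal_coverage {Ω : Type*} [MeasurableSpace Ω]
    (ℙ : Measure Ω) [IsProbabilityMeasure ℙ]
    (m : ℕ) (Z : Fin (m + 1) → Ω → ℝ) (hZ : ∀ i, Measurable (Z i))
    (hexch : ∀ σ : Equiv.Perm (Fin (m + 1)),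
      Measure.map (fun ω i => Z (σ i) ω) ℙ = Measure.map (fun ω i => Z i ω) ℙ)
    (α : ℝ) (hα : α ∈ Set.Ioo (0 : ℝ) 1)
    (hk : ⌈((m : ℝ) + 1) * (1 - α)⌉₊ ≤ m) :
    ENNReal.ofReal (1 - α) ≤
      ℙ {ω | Z (Fin.last m) ω ≤
        orderStat (⌈((m : ℝ) + 1) * (1 - α)⌉₊)
          (fun i : Fin m => Z i.castSucc ω)} :=
  conformal_coverage_general ℙ m Z hZ hexch α hk
end
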